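/- Set A := Ry(π/4), and on three qubits set CNOT₂₃ := I₂⊗CNOT and CNOT₁₃ := |0⟩⟨0|⊗I₄ + |1⟩⟨1|⊗(I₂⊗σx). Let Δ be the 8×8 diagonal matrix with diagonal entries (1,1,−1,1,1,1,1,1) (i.e. Δ sends the basis vector |010⟩ to its negative and fixes all other standard basis vectors). Then the Toffoli gate Toffoli := I₈ + (|1⟩⟨1|⊗|1⟩⟨1|)⊗(σx − I₂) satisfies Δ·Toffoli = (I₂⊗I₂⊗A) · CNOT₁₃ · (I₂⊗I₂⊗A) · CNOT₂₃ · (I₂⊗I₂⊗A†) · CNOT₁₃ · (I₂⊗I₂⊗A†). -/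

import Mathlib

open Matrix Complex Kronecker

/-- The rotation matrix about the y-axis of the Bloch sphere. -/
noncomputable def Ry (θ : ℝ) : Matrix (Fin 2) (Fin 2) ℂ :=
  !![(Real.cos (θ / 2) : ℂ), -(Real.sin (θ / 2) : ℂ);
     (Real.sin (θ / 2) : ℂ), (Real.cos (θ / 2) : ℂ)]

/-- The NOT gate `σx`. -/
def σx : Matrix (Fin 2) (Fin 2) ℂ := !![0, 1; 1, 0]

/-- The projector `|0⟩⟨0|`. -/
def P0 : Matrix (Fin 2) (Fin 2) ℂ := !![1, 0; 0, 0]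

/-- The projector `|1⟩⟨1|`. -/
def P1 : Matrix (Fin 2) (Fin 2) ℂ := !![0, 0; 0, 1]

/-- The CNOT gate `|0⟩⟨0|⊗I₂ + |1⟩⟨1|⊗σx`. -/
def CNOT : Matrix (Fin 2 × Fin 2) (Fin 2 × Fin 2) ℂ :=
  P0 ⊗ₖ (1 : Matrix (Fin 2) (Fin 2) ℂ) + P1 ⊗ₖ σx

noncomputable def A : Matrix (Fin 2) (Fin 2) ℂ := Ry (Real.pi / 4)

/-- CNOT on qubits 2,3 of three qubits, i.e. `I₂ ⊗ CNOT`. -/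
def CNOT₂₃ : Matrix ((Fin 2 × Fin 2) × Fin 2) ((Fin 2 × Fin 2) × Fin 2) ℂ :=
  ((1 : Matrix (Fin 2) (Fin 2) ℂ) ⊗ₖ P0) ⊗ₖ (1 : Matrix (Fin 2) (Fin 2) ℂ)
    + ((1 : Matrix (Fin 2) (Fin 2) ℂ) ⊗ₖ P1) ⊗ₖ σx

/-- CNOT on qubits 1,3 of three qubits, i.e. `|0⟩⟨0|⊗I₄ + |1⟩⟨1|⊗(I₂⊗σx)`. -/
def CNOT₁₃ : Matrix ((Fin 2 × Fin 2) × Fin 2) ((Fin 2 × Fin 2) × Fin 2) ℂ :=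
  (P0 ⊗ₖ (1 : Matrix (Fin 2) (Fin 2) ℂ)) ⊗ₖ (1 : Matrix (Fin 2) (Fin 2) ℂ)
    + (P1 ⊗ₖ (1 : Matrix (Fin 2) (Fin 2) ℂ)) ⊗ₖ σx

/-- The Toffoli gate. -/
def Toffoli : Matrix ((Fin 2 × Fin 2) × Fin 2) ((Fin 2 × Fin 2) × Fin 2) ℂ :=
  1 + (P1 ⊗ₖ P1) ⊗ₖ (σx - 1)

/-- The diagonal gate sending `|010⟩` to `−|010⟩` and fixing the other
standard basis vectors. -/
def Δ : Matrix ((Fin 2 × Fin 2) × Fin 2) ((Fin 2 × Fin 2) × Fin 2) ℂ :=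
  Matrix.diagonal fun x =>
    if x = (((0 : Fin 2), (1 : Fin 2)), (0 : Fin 2)) then -1 else 1

/-! Every gate of the circuit is block diagonal with respect to the two control qubits, so the
identity splits into four `2 × 2` identities on the target qubit, one per control state `(a, b)`.
With `A = Ry θ` and `σx Ry θ = Ry (-θ) σx`, the blocks `(0,0)`, `(1,0)`, `(1,1)` collapse to
`1`, `1`, `σx` for every angle `θ`. Only the block `(0,1)`, equal to `Ry (2θ) σx Ry (-2θ)`, depends
on the angle: for `θ = π/4` it is `diag(-1, 1)`, the phase recorded by `Δ`. -/

namespace Matrix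

variable {ι m R : Type*} [DecidableEq ι]

/-- `∑ i, |i⟩⟨i| ⊗ U i`, with the control register as the first tensor factor. -/
def controlled [Zero R] (U : ι → Matrix m m R) : Matrix (ι × m) (ι × m) R :=
  of fun i j => if i.1 = j.1 then U i.1 i.2 j.2 else 0

theorem controlled_mul_controlled [Fintype ι] [Fintype m] [NonUnitalNonAssocSemiring R]
    (U V : ι → Matrix m m R) : controlled U * controlled V = controlled (U * V) := by
  ext ⟨i, a⟩ ⟨j, b⟩
  simp only [controlled, mul_apply, of_apply, Fintype.sum_prod_type, ite_mul, zero_mul,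
    mul_ite, mul_zero, Pi.mul_apply]
  by_cases h : i = j
  · subst h; simp
  · simp [h, eq_comm]

theorem one_kronecker_eq_controlled [MulZeroOneClass R] (U : Matrix m m R) :
    (1 : Matrix ι ι R) ⊗ₖ U = controlled fun _ => U := by
  ext ⟨i, a⟩ ⟨j, b⟩
  by_cases h : i = j <;> simp [controlled, h]

end Matrix

theorem Ry_zero : Ry 0 = 1 := by
  ext i j; fin_cases i <;> fin_cases j <;> simp [Ry]

theorem Ry_mul_Ry (a b : ℝ) : Ry a * Ry b = Ry (a + b) := by
  have hc : Real.cos ((a + b) / 2) =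
      Real.cos (a / 2) * Real.cos (b / 2) - Real.sin (a / 2) * Real.sin (b / 2) := by
    rw [add_div, Real.cos_add]
  have hs : Real.sin ((a + b) / 2) =
      Real.sin (a / 2) * Real.cos (b / 2) + Real.cos (a / 2) * Real.sin (b / 2) := by
    rw [add_div, Real.sin_add]
  ext i j
  fin_cases i <;> fin_cases j <;>
    simp [Ry, mul_apply, Fin.sum_univ_two, hc, hs, -Complex.ofReal_cos, -Complex.ofReal_sin] <;>
    ring

theorem Ry_mul_Ry_neg (θ : ℝ) : Ry θ * Ry (-θ) = 1 := by
  rw [Ry_mul_Ry, add_neg_cancel, Ry_zero]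

theorem conjTranspose_Ry (θ : ℝ) : (Ry θ)ᴴ = Ry (-θ) := by
  ext i j
  fin_cases i <;> fin_cases j <;> simp [Ry, neg_div, -Complex.ofReal_cos, -Complex.ofReal_sin]

theorem σx_mul_σx : σx * σx = 1 := by
  ext i j; fin_cases i <;> fin_cases j <;> simp [σx, mul_apply, Fin.sum_univ_two, one_apply]

theorem σx_mul_Ry (θ : ℝ) : σx * Ry θ = Ry (-θ) * σx := by
  ext i j
  fin_cases i <;> fin_cases j <;>
    simp [Ry, σx, mul_apply, Fin.sum_univ_two, neg_div, -Complex.ofReal_cos, -Complex.ofReal_sin]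

theorem Ry_mul_σx_mul_Ry_neg (θ : ℝ) :
    Ry θ * σx * Ry (-θ) = !![-(Real.sin θ : ℂ), Real.cos θ; Real.cos θ, Real.sin θ] := by
  have hc : Real.cos θ = Real.cos (θ / 2) ^ 2 - Real.sin (θ / 2) ^ 2 := by
    rw [← Real.cos_two_mul', mul_div_cancel₀ _ two_ne_zero]
  have hs : Real.sin θ = 2 * Real.sin (θ / 2) * Real.cos (θ / 2) := by
    rw [← Real.sin_two_mul, mul_div_cancel₀ _ two_ne_zero]
  ext i j
  fin_cases i <;> fin_cases j <;>
    simp [Ry, σx, mul_apply, Fin.sum_univ_two, neg_div, hc, hs, -Complex.ofReal_cos,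
      -Complex.ofReal_sin] <;>
    ring

theorem CNOT₁₃_eq_controlled :
    CNOT₁₃ = controlled fun c : Fin 2 × Fin 2 => if c.1 = 1 then σx else 1 := by
  ext ⟨i, t⟩ ⟨j, t'⟩
  fin_cases i <;> fin_cases j <;> fin_cases t <;> fin_cases t' <;>
    simp [CNOT₁₃, controlled, P0, P1, σx, one_apply]

theorem CNOT₂₃_eq_controlled :
    CNOT₂₃ = controlled fun c : Fin 2 × Fin 2 => if c.2 = 1 then σx else 1 := by
  ext ⟨i, t⟩ ⟨j, t'⟩
  fin_cases i <;> fin_cases j <;> fin_cases t <;> fin_cases t' <;>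
    simp [CNOT₂₃, controlled, P0, P1, σx, one_apply]

theorem Toffoli_eq_controlled :
    Toffoli = controlled fun c : Fin 2 × Fin 2 => if c = (1, 1) then σx else 1 := by
  ext ⟨i, t⟩ ⟨j, t'⟩
  fin_cases i <;> fin_cases j <;> fin_cases t <;> fin_cases t' <;>
    simp [Toffoli, controlled, P1, σx, one_apply]

theorem Δ_eq_controlled :
    Δ = controlled fun c : Fin 2 × Fin 2 => if c = (0, 1) then !![-1, 0; 0, 1] else 1 := by
  ext ⟨i, t⟩ ⟨j, t'⟩
  fin_cases i <;> fin_cases j <;> fin_cases t <;> fin_cases t' <;>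
    simp [Δ, controlled, one_apply]

/-- A Toffoli gate, up to the diagonal gate `Δ`, can be performed with 3 CNOTs. -/
theorem toffoli_up_to_diagonal :
    Δ * Toffoli =
      ((1 : Matrix (Fin 2) (Fin 2) ℂ) ⊗ₖ (1 : Matrix (Fin 2) (Fin 2) ℂ)) ⊗ₖ A
        * CNOT₁₃
        * ((1 : Matrix (Fin 2) (Fin 2) ℂ) ⊗ₖ (1 : Matrix (Fin 2) (Fin 2) ℂ)) ⊗ₖ A
        * CNOT₂₃
        * ((1 : Matrix (Fin 2) (Fin 2) ℂ) ⊗ₖ (1 : Matrix (Fin 2) (Fin 2) ℂ)) ⊗ₖ Aᴴ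
        * CNOT₁₃
        * ((1 : Matrix (Fin 2) (Fin 2) ℂ) ⊗ₖ (1 : Matrix (Fin 2) (Fin 2) ℂ)) ⊗ₖ Aᴴ := by
  rw [Δ_eq_controlled, Toffoli_eq_controlled, CNOT₁₃_eq_controlled, CNOT₂₃_eq_controlled,
    one_kronecker_one, one_kronecker_eq_controlled A, one_kronecker_eq_controlled Aᴴ]
  simp only [controlled_mul_controlled]
  congr 1
  funext ⟨a, b⟩
  fin_cases a <;> fin_cases b <;>
    simp only [Fin.isValue, Fin.zero_eta, Fin.mk_one, Pi.mul_apply, Prod.mk.injEq, zero_ne_one,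
      one_ne_zero, and_false, and_true, and_self, ↓reduceIte, mul_one, one_mul, A, conjTranspose_Ry]
  · rw [mul_assoc (Ry _), Ry_mul_Ry_neg, mul_one, Ry_mul_Ry_neg]
  · rw [Ry_mul_Ry, mul_assoc, Ry_mul_Ry, ← neg_add,
      show Real.pi / 4 + Real.pi / 4 = Real.pi / 2 by ring, Ry_mul_σx_mul_Ry_neg,
      Real.cos_pi_div_two, Real.sin_pi_div_two]
    simp
  · rw [mul_assoc (Ry _ * σx), Ry_mul_Ry_neg, mul_one, mul_assoc (Ry _), σx_mul_σx, mul_one,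
      Ry_mul_Ry_neg]
  · rw [mul_assoc (Ry _) σx, σx_mul_Ry, ← mul_assoc, Ry_mul_Ry_neg, one_mul, σx_mul_σx, one_mul,
      mul_assoc, σx_mul_Ry, neg_neg, ← mul_assoc, Ry_mul_Ry, neg_add_cancel, Ry_zero, one_mul]
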